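/- arXiv:1811.01372 — 2 statements merged into one kernel-verified Lean document; each statement's English description precedes it below -/
import Mathlib

section
/- Let f : ℝⁿ → ℝⁿ be continuous, X ⊆ ℝⁿ, X_T ⊆ X, T > 0, and let v : [0,T] × ℝⁿ → ℝ be continuously differentiable with (∂v/∂t + ∇ₓv · f)(t,x) ≤ 0 for all (t,x) ∈ [0,T] × X, and v(T,x) ≥ 0 for all x ∈ X_T. If x₀ ∈ X admits a solution x(·) of ẋ = f(x) on [0,T] with x(0) = x₀, x(t) ∈ X for all t ∈ [0,T], and x(T) ∈ X_T, then v(0, x₀) ≥ 0. -/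
/-! Along a trajectory `x`, the chain rule identifies the derivative of `t ↦ v t (x t)` with the
Lie derivative `∂v/∂t + ∇ₓv · f` at `(t, x t)`, which is nonpositive while `x t ∈ X`. Hence
`v` decreases along the trajectory, so `v 0 x₀ ≥ v T (x T) ≥ 0`. -/

section

variable {E : Type*} [NormedAddCommGroup E] [NormedSpace ℝ E]

theorem hasDerivAt_comp_graph {V : ℝ × E → ℝ} {γ : ℝ → E} {γ' : E} {t : ℝ}
    (hV : DifferentiableAt ℝ V (t, γ t)) (hγ : HasDerivAt γ γ' t) :
    HasDerivAt (fun s => V (s, γ s)) (fderiv ℝ V (t, γ t) (1, γ')) t :=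
  hV.hasFDerivAt.comp_hasDerivAt t ((hasDerivAt_id t).prodMk hγ)

theorem antitoneOn_comp_graph_of_fderiv_nonpos {V : ℝ × E → ℝ} {γ γ' : ℝ → E} {a b : ℝ}
    (hV : ∀ t ∈ Set.Icc a b, DifferentiableAt ℝ V (t, γ t))
    (hγ : ∀ t ∈ Set.Icc a b, HasDerivAt γ (γ' t) t)
    (hdecr : ∀ t ∈ Set.Icc a b, fderiv ℝ V (t, γ t) (1, γ' t) ≤ 0) :
    AntitoneOn (fun t => V (t, γ t)) (Set.Icc a b) := by
  have hderiv : ∀ t ∈ Set.Icc a b,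
      HasDerivAt (fun s => V (s, γ s)) (fderiv ℝ V (t, γ t) (1, γ' t)) t :=
    fun t ht => hasDerivAt_comp_graph (hV t ht) (hγ t ht)
  exact antitoneOn_of_hasDerivWithinAt_nonpos (convex_Icc a b)
    (fun t ht => (hderiv t ht).continuousAt.continuousWithinAt)
    (fun t ht => (hderiv t (interior_subset ht)).hasDerivWithinAt)
    (fun t ht => hdecr t (interior_subset ht))

end

theorem stmt_5_general {n : ℕ} (f : (Fin n → ℝ) → (Fin n → ℝ))
    (X XT : Set (Fin n → ℝ)) (T : ℝ) (hT : 0 < T)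
    (v : ℝ → (Fin n → ℝ) → ℝ)
    (hv : ContDiff ℝ 1 (Function.uncurry v))
    (hdecr : ∀ t ∈ Set.Icc (0 : ℝ) T, ∀ y ∈ X,
      fderiv ℝ (Function.uncurry v) (t, y) (1, f y) ≤ 0)
    (hvT : ∀ y ∈ XT, 0 ≤ v T y)
    (x₀ : Fin n → ℝ)
    (x : ℝ → (Fin n → ℝ))
    (hsol : ∀ t ∈ Set.Icc (0 : ℝ) T, HasDerivAt x (f (x t)) t)
    (hinit : x 0 = x₀)
    (hstay : ∀ t ∈ Set.Icc (0 : ℝ) T, x t ∈ X)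
    (hfin : x T ∈ XT) :
    0 ≤ v 0 x₀ := by
  have hanti : AntitoneOn (fun t => v t (x t)) (Set.Icc 0 T) :=
    antitoneOn_comp_graph_of_fderiv_nonpos (V := Function.uncurry v)
      (fun t _ => (hv.differentiable one_ne_zero).differentiableAt) hsol
      (fun t ht => hdecr t ht (x t) (hstay t ht))
  calc 0 ≤ v T (x T) := hvT (x T) hfin
    _ ≤ v 0 (x 0) := hanti (Set.left_mem_Icc.2 hT.le) (Set.right_mem_Icc.2 hT.le) hT.le
    _ = v 0 x₀ := by rw [hinit]

theorem stmt_5 {n : ℕ} (f : (Fin n → ℝ) → (Fin n → ℝ)) (hf : Continuous f)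
    (X XT : Set (Fin n → ℝ)) (hXT : XT ⊆ X) (T : ℝ) (hT : 0 < T)
    (v : ℝ → (Fin n → ℝ) → ℝ)
    (hv : ContDiff ℝ 1 (Function.uncurry v))
    (hdecr : ∀ t ∈ Set.Icc (0 : ℝ) T, ∀ y ∈ X,
      fderiv ℝ (Function.uncurry v) (t, y) (1, f y) ≤ 0)
    (hvT : ∀ y ∈ XT, 0 ≤ v T y)
    (x₀ : Fin n → ℝ) (hx₀ : x₀ ∈ X)
    (x : ℝ → (Fin n → ℝ))
    (hsol : ∀ t ∈ Set.Icc (0 : ℝ) T, HasDerivAt x (f (x t)) t)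
    (hinit : x 0 = x₀)
    (hstay : ∀ t ∈ Set.Icc (0 : ℝ) T, x t ∈ X)
    (hfin : x T ∈ XT) :
    0 ≤ v 0 x₀ :=
  stmt_5_general f X XT T hT v hv hdecr hvT x₀ x hsol hinit hstay hfin
end

section
/- Under the dual certificate assumptions (L v ≤ 0 on [0,T]×X, v(T,·) ≥ 0 on X_T, w ≥ v(0,·)+1 on X, w ≥ 0 on X), the integral ∫_X w dλ is at least λ(X₀), the Lebesgue measure of the region of attraction, provided X₀ is measurable. -/
/-!
Along any trajectory certifying `x₀ ∈ X₀`, the certificate `v` is nonincreasing, so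
`w x₀ ≥ v(0, x₀) + 1 ≥ v(T, x(T)) + 1 ≥ 1`. Hence `w ≥ 1` on `X₀`, and Markov's inequality for the
nonnegative `w` bounds `λ(X₀)` by `∫_X w dλ`.
-/

open MeasureTheory Set

theorem HasDerivAt.fderiv_apply_prodMk {E F : Type*} [NormedAddCommGroup E] [NormedSpace ℝ E]
    [NormedAddCommGroup F] [NormedSpace ℝ F] {V : ℝ × E → F} {x : ℝ → E} {x' : E} {t : ℝ} (hV : DifferentiableAt ℝ V (t, x t))
    (hx : HasDerivAt x x' t) :
    HasDerivAt (fun s => V (s, x s)) (fderiv ℝ V (t, x t) (1, x')) t :=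
  hV.hasFDerivAt.comp_hasDerivAt t ((hasDerivAt_id t).prodMk hx)

theorem le_of_fderiv_along_solution_nonpos {E : Type*} [NormedAddCommGroup E] [NormedSpace ℝ E]
    {V : ℝ × E → ℝ} (hV : Differentiable ℝ V) {f : E → E} {x : ℝ → E} {a b : ℝ} (hab : a ≤ b)
    (hx : ∀ t ∈ Icc a b, HasDerivAt x (f (x t)) t)
    (hdecr : ∀ t ∈ Icc a b, fderiv ℝ V (t, x t) (1, f (x t)) ≤ 0) :
    V (b, x b) ≤ V (a, x a) := by
  have hderiv : ∀ t ∈ Icc a b,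
      HasDerivAt (fun s => V (s, x s)) (fderiv ℝ V (t, x t) (1, f (x t))) t :=
    fun t ht => (hx t ht).fderiv_apply_prodMk (hV _)
  have hanti : AntitoneOn (fun s => V (s, x s)) (Icc a b) := by
    apply antitoneOn_of_hasDerivWithinAt_nonpos (convex_Icc a b)
      (fun t ht => (hderiv t ht).continuousAt.continuousWithinAt)
      (fun t ht => (hderiv t (Ioo_subset_Icc_self (interior_Icc (a := a) ▸ ht))).hasDerivWithinAt)
    intro t ht
    exact hdecr t (Ioo_subset_Icc_self (interior_Icc (a := a) ▸ ht))
  exact hanti (left_mem_Icc.2 hab) (right_mem_Icc.2 hab) hab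

theorem measure_le_ofReal_setIntegral_of_one_le {α : Type*} [MeasurableSpace α] {μ : Measure α}
    {s S : Set α} {g : α → ℝ} (hs : MeasurableSet s) (hg : IntegrableOn g s μ)
    (hg0 : ∀ y ∈ s, 0 ≤ g y) (hS : S ⊆ s) (h1 : ∀ y ∈ S, 1 ≤ g y) :
    μ S ≤ ENNReal.ofReal (∫ y in s, g y ∂μ) := by
  calc μ S ≤ μ ({y | 1 ≤ ENNReal.ofReal (g y)} ∩ s) :=
        measure_mono fun y hy => ⟨ENNReal.one_le_ofReal.2 (h1 y hy), hS hy⟩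
    _ ≤ μ.restrict s {y | 1 ≤ ENNReal.ofReal (g y)} := Measure.le_restrict_apply _ _
    _ ≤ ∫⁻ y in s, ENNReal.ofReal (g y) ∂μ := by
        simpa using mul_meas_ge_le_lintegral₀ hg.aemeasurable.ennreal_ofReal 1
    _ = ENNReal.ofReal (∫ y in s, g y ∂μ) :=
        (ofReal_integral_eq_lintegral_ofReal hg (ae_restrict_of_forall_mem hs hg0)).symm

theorem stmt_7_general {n : ℕ} (f : (Fin n → ℝ) → (Fin n → ℝ))
    (X XT : Set (Fin n → ℝ))
    (hXm : MeasurableSet X) (T : ℝ) (hT : 0 < T)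
    (v : ℝ → (Fin n → ℝ) → ℝ)
    (hv : ContDiff ℝ 1 (Function.uncurry v))
    (hdecr : ∀ t ∈ Set.Icc (0 : ℝ) T, ∀ y ∈ X,
      fderiv ℝ (Function.uncurry v) (t, y) (1, f y) ≤ 0)
    (hvT : ∀ y ∈ XT, 0 ≤ v T y)
    (w : (Fin n → ℝ) → ℝ) (hwint : MeasureTheory.IntegrableOn w X)
    (hw : ∀ y ∈ X, v 0 y + 1 ≤ w y)
    (hwpos : ∀ y ∈ X, 0 ≤ w y)
    (X₀ : Set (Fin n → ℝ))
    (hX₀ : X₀ = {x₀ | x₀ ∈ X ∧ ∃ x : ℝ → (Fin n → ℝ),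
      (∀ t ∈ Set.Icc (0 : ℝ) T, HasDerivAt x (f (x t)) t) ∧
      x 0 = x₀ ∧ (∀ t ∈ Set.Icc (0 : ℝ) T, x t ∈ X) ∧ x T ∈ XT}) :
    MeasureTheory.volume X₀ ≤ ENNReal.ofReal (∫ y in X, w y) := by
  subst hX₀
  refine measure_le_ofReal_setIntegral_of_one_le hXm hwint hwpos (fun y hy => hy.1) ?_
  rintro _ ⟨hyX, x, hx, rfl, hxX, hxT⟩
  have hv_decr : v T (x T) ≤ v 0 (x 0) :=
    le_of_fderiv_along_solution_nonpos (hv.differentiable one_ne_zero) hT.le hx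
      fun t ht => hdecr t ht (x t) (hxX t ht)
  linarith [hw _ hyX, hvT _ hxT]

theorem stmt_7 {n : ℕ} (f : (Fin n → ℝ) → (Fin n → ℝ)) (hf : Continuous f)
    (X XT : Set (Fin n → ℝ)) (hXT : XT ⊆ X) (hX : IsCompact X)
    (hXm : MeasurableSet X) (T : ℝ) (hT : 0 < T)
    (v : ℝ → (Fin n → ℝ) → ℝ)
    (hv : ContDiff ℝ 1 (Function.uncurry v))
    (hdecr : ∀ t ∈ Set.Icc (0 : ℝ) T, ∀ y ∈ X,
      fderiv ℝ (Function.uncurry v) (t, y) (1, f y) ≤ 0)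
    (hvT : ∀ y ∈ XT, 0 ≤ v T y)
    (w : (Fin n → ℝ) → ℝ) (hwint : MeasureTheory.IntegrableOn w X)
    (hw : ∀ y ∈ X, v 0 y + 1 ≤ w y)
    (hwpos : ∀ y ∈ X, 0 ≤ w y)
    (X₀ : Set (Fin n → ℝ))
    (hX₀ : X₀ = {x₀ | x₀ ∈ X ∧ ∃ x : ℝ → (Fin n → ℝ),
      (∀ t ∈ Set.Icc (0 : ℝ) T, HasDerivAt x (f (x t)) t) ∧
      x 0 = x₀ ∧ (∀ t ∈ Set.Icc (0 : ℝ) T, x t ∈ X) ∧ x T ∈ XT})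
    (hX₀m : MeasurableSet X₀) :
    MeasureTheory.volume X₀ ≤ ENNReal.ofReal (∫ y in X, w y) :=
  stmt_7_general f X XT hXm T hT v hv hdecr hvT w hwint hw hwpos X₀ hX₀
end
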